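/- arXiv:1603.05579 — 4 statements merged into one kernel-verified Lean document; each statement's English description precedes it below -/
import Mathlib

section
/- Assume each cost function c_y is continuous on Ω (Reg') and that for all y ≠ z in Y and every t ∈ ℝ the level set {x ∈ Ω : c(x,y) − c(x,z) = t} has Lebesgue measure zero (Twist'). Let ρ be a bounded probability density supported in a compact set X ⊆ Ω and let ν = ∑_{y∈Y} ν_y δ_y be a probability measure on Y. Then the Kantorovich functional Φ(ψ) = ∫_X min_{y∈Y}(c(x,y)+ψ(y)) ρ(x) dx − ∑_{y∈Y} ψ(y) ν_y is concave on ℝ^Y, continuously differentiable, and its gradient is given by ∂Φ/∂ψ(y) (ψ) = ∫_{Lag_y(ψ)} ρ(x) dx − ν_y for every y ∈ Y. -/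
/-!
For fixed `x`, `ψ ↦ min_y (c(x,y) + ψ(y))` is a minimum of finitely many affine functions, hence
concave and `1`-Lipschitz for the sup norm. Where the minimum is attained at a single `y₀`, it
agrees near `ψ` with `ψ ↦ c(x,y₀) + ψ(y₀)`, so it is differentiable with gradient the `y₀`-th
coordinate, and membership of `x` in each Laguerre cell is locally constant in `ψ`. By (Twist')
ties happen only on a null set, so differentiation under the integral sign (dominated by `ρ`)
gives the gradient `ρ(Lag_y(ψ)) - ν_y`, and dominated convergence makes it continuous in `ψ`.
-/

open MeasureTheory Set Filter Topology

section FiniteMin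

variable {Y : Type*} [Fintype Y]

theorem Function.Injective.exists_forall_ne_lt [Nonempty Y] {g : Y → ℝ}
    (hg : Function.Injective g) :
    ∃ y₀, ∀ z ≠ y₀, g y₀ < g z := by
  obtain ⟨y₀, hy₀⟩ := Finite.exists_min g
  exact ⟨y₀, fun z hz => (hy₀ z).lt_of_ne (hg.ne hz.symm)⟩

theorem ciInf_eq_of_forall_ne_lt {g : Y → ℝ} {y₀ : Y} (h : ∀ z ≠ y₀, g y₀ < g z) :
    ⨅ y, g y = g y₀ :=
  have : Nonempty Y := ⟨y₀⟩
  le_antisymm (ciInf_le (Finite.bddBelow_range g) y₀) <| le_ciInf fun z =>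
    (eq_or_ne z y₀).elim (fun hz => hz ▸ le_rfl) fun hz => (h z hz).le

theorem ciInf_add_le_ciInf_add_add_norm [Nonempty Y] (f ψ φ : Y → ℝ) :
    ⨅ y, f y + ψ y ≤ (⨅ y, f y + φ y) + ‖ψ - φ‖ := by
  obtain ⟨y, hy⟩ : ∃ y, f y + φ y = ⨅ z, f z + φ z := exists_eq_ciInf_of_finite
  have hψφ : ψ y - φ y ≤ ‖ψ - φ‖ := (le_abs_self _).trans (norm_le_pi_norm (ψ - φ) y)
  calc ⨅ y, f y + ψ y ≤ f y + ψ y := ciInf_le (Finite.bddBelow_range _) y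
    _ ≤ (⨅ y, f y + φ y) + ‖ψ - φ‖ := by linarith

theorem abs_ciInf_add_sub_ciInf_add_le [Nonempty Y] (f ψ φ : Y → ℝ) :
    |(⨅ y, f y + ψ y) - ⨅ y, f y + φ y| ≤ ‖ψ - φ‖ :=
  abs_sub_le_iff.2 ⟨by linarith [ciInf_add_le_ciInf_add_add_norm f ψ φ],
    by linarith [ciInf_add_le_ciInf_add_add_norm f φ ψ, norm_sub_rev ψ φ]⟩

theorem concaveOn_ciInf_add [Nonempty Y] (f : Y → ℝ) :
    ConcaveOn ℝ univ fun ψ : Y → ℝ => ⨅ y, f y + ψ y := by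
  refine ⟨convex_univ, fun ψ _ φ _ a b ha hb hab => le_ciInf fun y => ?_⟩
  calc a • (⨅ y, f y + ψ y) + b • ⨅ y, f y + φ y ≤ a • (f y + ψ y) + b • (f y + φ y) := by
        gcongr <;> exact ciInf_le (Finite.bddBelow_range _) y
    _ = f y + (a • ψ + b • φ) y := by
        simp only [smul_eq_mul, Pi.add_apply, Pi.smul_apply]
        linear_combination f y * hab

theorem eventually_forall_ne_lt_add {f ψ : Y → ℝ} {y₀ : Y}
    (h : ∀ z ≠ y₀, f y₀ + ψ y₀ < f z + ψ z) :
    ∀ᶠ φ in 𝓝 ψ, ∀ z ≠ y₀, f y₀ + φ y₀ < f z + φ z := by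
  refine eventually_all.2 fun z => ?_
  rcases eq_or_ne z y₀ with rfl | hz
  · exact Eventually.of_forall fun _ h => absurd rfl h
  · have hcont : ∀ y, Continuous fun φ : Y → ℝ => f y + φ y :=
      fun y => continuous_const.add (continuous_apply y)
    exact ((hcont y₀).continuousAt.eventually_lt (hcont z).continuousAt (h z hz)).mono
      fun _ hφ _ => hφ

theorem hasFDerivAt_ciInf_add {f ψ : Y → ℝ} {y₀ : Y} (h : ∀ z ≠ y₀, f y₀ + ψ y₀ < f z + ψ z) :
    HasFDerivAt (fun φ : Y → ℝ => ⨅ y, f y + φ y) (ContinuousLinearMap.proj (R := ℝ) y₀) ψ := by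
  have hloc : (fun φ : Y → ℝ => ⨅ y, f y + φ y) =ᶠ[𝓝 ψ] fun φ => f y₀ + φ y₀ :=
    (eventually_forall_ne_lt_add h).mono fun _ hφ => ciInf_eq_of_forall_ne_lt hφ
  have hlin : HasFDerivAt (fun φ : Y → ℝ => f y₀ + φ y₀) (ContinuousLinearMap.proj (R := ℝ) y₀) ψ :=
    (hasFDerivAt_apply y₀ ψ).const_add (f y₀)
  exact hlin.congr_of_eventuallyEq hloc

end FiniteMin

theorem IsOpen.measurableSet_sep_le {E : Type*} [TopologicalSpace E] [MeasurableSpace E]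
    [OpensMeasurableSpace E] {Ω : Set E} (hΩ : IsOpen Ω) {f g : E → ℝ} (hf : ContinuousOn f Ω)
    (hg : ContinuousOn g Ω) : MeasurableSet {x ∈ Ω | f x ≤ g x} := by
  have hlt : IsOpen (Ω ∩ (fun x => f x - g x) ⁻¹' Ioi 0) :=
    (hf.sub hg).isOpen_inter_preimage hΩ isOpen_Ioi
  convert hΩ.measurableSet.diff hlt.measurableSet using 1
  ext x
  simp only [mem_sep_iff, Set.mem_sdiff, mem_inter_iff, mem_preimage, mem_Ioi, sub_pos, not_and,
    not_lt]
  exact ⟨fun h => ⟨h.1, fun _ => h.2⟩, fun h => ⟨h.1, h.2 h.1⟩⟩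

theorem concaveOn_integral {α V : Type*} [MeasurableSpace α] {μ : Measure α} [AddCommGroup V]
    [Module ℝ V] {s : Set V} {F : V → α → ℝ} (hs : Convex ℝ s)
    (hF : ∀ᵐ x ∂μ, ConcaveOn ℝ s (F · x)) (hint : ∀ v ∈ s, Integrable (F v) μ) :
    ConcaveOn ℝ s fun v => ∫ x, F v x ∂μ := by
  refine ⟨hs, fun v hv w hw a b ha hb hab => ?_⟩
  calc a • ∫ x, F v x ∂μ + b • ∫ x, F w x ∂μ = ∫ x, a • F v x + b • F w x ∂μ := by
        rw [integral_add (f := fun x => a • F v x) (g := fun x => b • F w x)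
          ((hint v hv).smul a) ((hint w hw).smul b), integral_smul, integral_smul]
    _ ≤ ∫ x, F (a • v + b • w) x ∂μ :=
        integral_mono_ae (((hint v hv).smul a).add ((hint w hw).smul b))
          (hint _ (hs hv hw ha hb hab)) (hF.mono fun _ hx => hx.2 hv hw ha hb hab)

theorem setIntegral_restrict_of_forall_notMem_eq_zero {α G : Type*} [MeasurableSpace α]
    [NormedAddCommGroup G] [NormedSpace ℝ G] {μ : Measure α} {s X : Set α} {f : α → G}
    (hs : MeasurableSet s) (hf : ∀ x ∉ X, f x = 0) :
    ∫ x in s, f x ∂μ.restrict X = ∫ x in s, f x ∂μ := by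
  rw [Measure.restrict_restrict hs]
  exact (setIntegral_eq_of_subset_of_forall_sdiff_eq_zero hs inter_subset_left
    fun x hx => hf x fun hxX => hx.2 ⟨hx.1, hxX⟩).symm

section Laguerre

variable {E Y : Type*}

noncomputable def cTransform (c : E → Y → ℝ) (ψ : Y → ℝ) (x : E) : ℝ := ⨅ y, c x y + ψ y

def laguerreCell (Ω : Set E) (c : E → Y → ℝ) (ψ : Y → ℝ) (y : Y) : Set E :=
  {x ∈ Ω | ∀ z, c x y + ψ y ≤ c x z + ψ z}

variable {Ω : Set E} {c : E → Y → ℝ}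

theorem indicator_laguerreCell_of_forall_ne_lt [DecidableEq Y] {ψ : Y → ℝ} {ρ : E → ℝ} {x : E}
    {y₀ : Y} (hx : x ∈ Ω) (h : ∀ z ≠ y₀, c x y₀ + ψ y₀ < c x z + ψ z) (y : Y) :
    (laguerreCell Ω c ψ y).indicator ρ x = if y = y₀ then ρ x else 0 := by
  have hmem : x ∈ laguerreCell Ω c ψ y ↔ y = y₀ := by
    refine ⟨fun hy => by_contra fun hne => (hy.2 y₀).not_gt (h y hne), ?_⟩
    rintro rfl
    exact ⟨hx, fun z => (eq_or_ne z y).elim (fun hz => hz ▸ le_rfl) fun hz => (h z hz).le⟩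
  by_cases hy : y = y₀
  · rw [indicator_of_mem (hmem.2 hy), if_pos hy]
  · rw [indicator_of_notMem (mt hmem.1 hy), if_neg hy]

variable [Fintype Y] [Nonempty Y]

theorem laguerreCell_eq_sep_le_cTransform (ψ : Y → ℝ) (y : Y) :
    laguerreCell Ω c ψ y = {x ∈ Ω | c x y + ψ y ≤ cTransform c ψ x} := by
  ext x
  simp only [laguerreCell, cTransform, mem_sep_iff]
  rw [le_ciInf_iff (Finite.bddBelow_range _)]

theorem ae_exists_forall_ne_lt_of_twist [MeasurableSpace E] {μ : Measure E}
    (hTwist : ∀ y z : Y, y ≠ z → ∀ t : ℝ, μ {x ∈ Ω | c x y - c x z = t} = 0) (ψ : Y → ℝ) :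
    ∀ᵐ x ∂μ, x ∈ Ω → ∃ y₀, ∀ z ≠ y₀, c x y₀ + ψ y₀ < c x z + ψ z := by
  have hties : ∀ y z, ∀ᵐ x ∂μ, x ∈ Ω → c x y + ψ y = c x z + ψ z → y = z := by
    intro y z
    by_cases hyz : y = z
    · exact ae_of_all _ fun _ _ _ => hyz
    · filter_upwards [measure_eq_zero_iff_ae_notMem.1 (hTwist y z hyz (ψ z - ψ y))]
        with x hx hxΩ heq
      exact absurd ⟨hxΩ, by linarith⟩ hx
  filter_upwards [ae_all_iff.2 fun y => ae_all_iff.2 (hties y)] with x hx hxΩ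
  exact Function.Injective.exists_forall_ne_lt fun y z => hx y z hxΩ

variable [TopologicalSpace E]

theorem continuousOn_cTransform (hc : ∀ y, ContinuousOn (c · y) Ω) (ψ : Y → ℝ) :
    ContinuousOn (cTransform c ψ) Ω := by
  have hinf :
      cTransform c ψ = fun x => Finset.univ.inf' Finset.univ_nonempty fun y => c x y + ψ y :=
    funext fun x => (Finset.inf'_univ_eq_ciInf _).symm
  rw [hinf]
  exact ContinuousOn.finset_inf'_apply _ fun y _ => (hc y).add continuousOn_const

variable [MeasurableSpace E] [OpensMeasurableSpace E] {μ : Measure E}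

theorem measurableSet_laguerreCell (hΩ : IsOpen Ω)
    (hc : ∀ y, ContinuousOn (c · y) Ω) (ψ : Y → ℝ) (y : Y) :
    MeasurableSet (laguerreCell Ω c ψ y) := by
  rw [laguerreCell_eq_sep_le_cTransform]
  exact hΩ.measurableSet_sep_le ((hc y).add continuousOn_const) (continuousOn_cTransform hc ψ)

theorem integrableOn_cTransform_mul [T2Space E] {X : Set E} (hX : IsCompact X) (hXΩ : X ⊆ Ω)
    (hc : ∀ y, ContinuousOn (c · y) Ω) {ρ : E → ℝ} (hρ : IntegrableOn ρ X μ) (ψ : Y → ℝ) :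
    IntegrableOn (fun x => cTransform c ψ x * ρ x) X μ :=
  hρ.continuousOn_mul ((continuousOn_cTransform hc ψ).mono hXΩ) hX

theorem hasFDerivAt_integral_cTransform_mul (hΩ : IsOpen Ω) (hc : ∀ y, ContinuousOn (c · y) Ω)
    (hTwist : ∀ y z : Y, y ≠ z → ∀ t : ℝ, μ {x ∈ Ω | c x y - c x z = t} = 0)
    (hΩμ : ∀ᵐ x ∂μ, x ∈ Ω) {ρ : E → ℝ} (hρ : Integrable ρ μ)
    (hint : ∀ ψ, Integrable (fun x => cTransform c ψ x * ρ x) μ) (ψ : Y → ℝ) :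
    HasFDerivAt (fun ψ => ∫ x, cTransform c ψ x * ρ x ∂μ)
      (∑ y, (∫ x in laguerreCell Ω c ψ y, ρ x ∂μ) •
        ContinuousLinearMap.proj (R := ℝ) (φ := fun _ : Y => ℝ) y) ψ := by
  classical
  have hcell := measurableSet_laguerreCell hΩ hc ψ
  set F' : E → (Y → ℝ) →L[ℝ] ℝ := fun x =>
    ∑ y, (laguerreCell Ω c ψ y).indicator ρ x •
      ContinuousLinearMap.proj (R := ℝ) (φ := fun _ : Y => ℝ) y
  have hF'int : ∀ y, Integrable
      (fun x => (laguerreCell Ω c ψ y).indicator ρ x •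
        ContinuousLinearMap.proj (R := ℝ) (φ := fun _ : Y => ℝ) y) μ :=
    fun y => (hρ.indicator (hcell y)).smul_const _
  have hlip : ∀ᵐ x ∂μ, ∀ ψ' ∈ univ,
      ‖cTransform c ψ' x * ρ x - cTransform c ψ x * ρ x‖ ≤ ‖ρ x‖ * ‖ψ' - ψ‖ :=
    ae_of_all _ fun x ψ' _ => by
      rw [← sub_mul, norm_mul, mul_comm, Real.norm_eq_abs]
      exact mul_le_mul_of_nonneg_left (abs_ciInf_add_sub_ciInf_add_le (c x) ψ' ψ) (abs_nonneg _)
  have hdiff : ∀ᵐ x ∂μ, HasFDerivAt (fun ψ => cTransform c ψ x * ρ x) (F' x) ψ := by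
    filter_upwards [hΩμ, ae_exists_forall_ne_lt_of_twist hTwist ψ] with x hxΩ hx
    obtain ⟨y₀, hy₀⟩ := hx hxΩ
    simp only [F', indicator_laguerreCell_of_forall_ne_lt hxΩ hy₀, ite_smul, zero_smul,
      Finset.sum_ite_eq', Finset.mem_univ, if_true]
    exact (hasFDerivAt_ciInf_add hy₀).mul_const (ρ x)
  have hF'meas : AEStronglyMeasurable F' μ :=
    (integrable_finsetSum (ε' := (Y → ℝ) →L[ℝ] ℝ) _ fun y _ => hF'int y).aestronglyMeasurable
  have hderiv := (hasFDerivAt_integral_of_dominated_loc_of_lip' univ_mem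
    (fun ψ' _ => (hint ψ').aestronglyMeasurable) (hint ψ)
    hF'meas hlip hρ.norm hdiff).2
  rw [integral_finsetSum _ fun y _ => hF'int y] at hderiv
  simpa only [integral_smul_const, integral_indicator (hcell _)] using hderiv

theorem continuous_setIntegral_laguerreCell (hΩ : IsOpen Ω) (hc : ∀ y, ContinuousOn (c · y) Ω)
    (hTwist : ∀ y z : Y, y ≠ z → ∀ t : ℝ, μ {x ∈ Ω | c x y - c x z = t} = 0)
    {ρ : E → ℝ} (hρ : Integrable ρ μ) (y : Y) :
    Continuous fun ψ => ∫ x in laguerreCell Ω c ψ y, ρ x ∂μ := by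
  classical
  have hcell := fun ψ => measurableSet_laguerreCell hΩ hc ψ y
  simp_rw [← integral_indicator (hcell _)]
  refine continuous_iff_continuousAt.2 fun ψ => continuousAt_of_dominated
    (Eventually.of_forall fun ψ' => (hρ.indicator (hcell ψ')).aestronglyMeasurable)
    (Eventually.of_forall fun _ => ae_of_all _ fun _ => norm_indicator_le_norm_self _ _)
    hρ.norm ?_
  filter_upwards [ae_exists_forall_ne_lt_of_twist hTwist ψ] with x hx
  by_cases hxΩ : x ∈ Ω
  · obtain ⟨y₀, hy₀⟩ := hx hxΩ
    have hloc : (fun φ => (laguerreCell Ω c φ y).indicator ρ x)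
        =ᶠ[𝓝 ψ] fun _ => (laguerreCell Ω c ψ y).indicator ρ x :=
      (eventually_forall_ne_lt_add hy₀).mono fun φ hφ => by
        dsimp only
        rw [indicator_laguerreCell_of_forall_ne_lt hxΩ hy₀,
          indicator_laguerreCell_of_forall_ne_lt hxΩ hφ]
    exact continuousAt_const.congr hloc.symm
  · have hout : ∀ φ, x ∉ laguerreCell Ω c φ y := fun φ hx => hxΩ hx.1
    simp only [indicator_of_notMem (hout _)]
    exact continuousAt_const

theorem hasFDerivAt_setIntegral_cTransform_mul [T2Space E] (hΩ : IsOpen Ω)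
    (hc : ∀ y, ContinuousOn (c · y) Ω)
    (hTwist : ∀ y z : Y, y ≠ z → ∀ t : ℝ, μ {x ∈ Ω | c x y - c x z = t} = 0)
    {X : Set E} (hX : IsCompact X) (hXΩ : X ⊆ Ω) {ρ : E → ℝ} (hρ : IntegrableOn ρ X μ)
    (hρX : ∀ x ∉ X, ρ x = 0) (ψ : Y → ℝ) :
    HasFDerivAt (fun ψ => ∫ x in X, cTransform c ψ x * ρ x ∂μ)
      (∑ y, (∫ x in laguerreCell Ω c ψ y, ρ x ∂μ) •
        ContinuousLinearMap.proj (R := ℝ) (φ := fun _ : Y => ℝ) y) ψ := by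
  simpa only [setIntegral_restrict_of_forall_notMem_eq_zero (measurableSet_laguerreCell hΩ hc _ _)
    hρX] using hasFDerivAt_integral_cTransform_mul hΩ hc
      (fun y z hyz t => Measure.restrict_le_self.absolutelyContinuous (hTwist y z hyz t))
      (ae_restrict_of_forall_mem hX.measurableSet hXΩ) hρ
      (integrableOn_cTransform_mul hX hXΩ hc hρ) ψ

end Laguerre

theorem kantorovich_functional_concave_C1_gradient_general
    (d : ℕ) (Ω : Set (EuclideanSpace ℝ (Fin d))) (hΩ : IsOpen Ω)
    (Y : Type*) [Fintype Y] [Nonempty Y]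
    (c : EuclideanSpace ℝ (Fin d) → Y → ℝ)
    -- (Reg') : each cost function is continuous on Ω
    (hReg : ∀ y : Y, ContinuousOn (fun x => c x y) Ω)
    -- (Twist') : level sets of differences of costs are Lebesgue-negligible
    (hTwist : ∀ y z : Y, y ≠ z → ∀ t : ℝ,
      volume {x ∈ Ω | c x y - c x z = t} = 0)
    -- X is a compact subset of Ω
    (X : Set (EuclideanSpace ℝ (Fin d))) (hX : IsCompact X) (hXΩ : X ⊆ Ω)
    -- ρ is a bounded probability density supported in X
    (ρ : EuclideanSpace ℝ (Fin d) → ℝ) (hρmeas : Measurable ρ)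
    (hρnn : ∀ x, 0 ≤ ρ x) (Cρ : ℝ) (hρbd : ∀ x, ρ x ≤ Cρ)
    (hρsupp : ∀ x, x ∉ X → ρ x = 0)
    -- ν = ∑_y ν_y δ_y is a probability measure on Y
    (ν : Y → ℝ)
    -- the Kantorovich functional
    (Φ : (Y → ℝ) → ℝ)
    (hΦ : ∀ ψ : Y → ℝ,
      Φ ψ = (∫ x in X, (⨅ y : Y, (c x y + ψ y)) * ρ x) - ∑ y, ψ y * ν y) :
    ConcaveOn ℝ univ Φ ∧ ContDiff ℝ 1 Φ ∧
      ∀ ψ v : Y → ℝ,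
        fderiv ℝ Φ ψ v =
          ∑ y, ((∫ x in {x ∈ Ω | ∀ z : Y, c x y + ψ y ≤ c x z + ψ z}, ρ x) - ν y) * v y := by
  have hρX : IntegrableOn ρ X :=
    Measure.integrableOn_of_bounded hX.measure_lt_top.ne hρmeas.aestronglyMeasurable (M := Cρ)
      (ae_of_all _ fun x => by rw [Real.norm_eq_abs, abs_of_nonneg (hρnn x)]; exact hρbd x)
  set L : (Y → ℝ) →L[ℝ] ℝ := ∑ y, ν y • ContinuousLinearMap.proj y
  have hΦL : Φ = (fun ψ => ∫ x in X, cTransform c ψ x * ρ x) - L := funext fun ψ => by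
    simp [hΦ, L, cTransform, mul_comm]
  have hderiv : ∀ ψ, HasFDerivAt Φ
      (∑ y, ((∫ x in laguerreCell Ω c ψ y, ρ x) - ν y) •
        ContinuousLinearMap.proj (R := ℝ) (φ := fun _ : Y => ℝ) y) ψ := fun ψ => by
    rw [hΦL]
    refine ((hasFDerivAt_setIntegral_cTransform_mul hΩ hReg hTwist hX hXΩ hρX hρsupp ψ).sub
      L.hasFDerivAt).congr_fderiv ?_
    ext v
    simp [L, sub_mul, Finset.sum_sub_distrib]
  refine ⟨?_, contDiff_one_iff_hasFDerivAt.2 ⟨_, ?_, hderiv⟩, fun ψ v => ?_⟩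
  · rw [hΦL]
    refine (concaveOn_integral convex_univ (ae_of_all _ fun x => ?_)
      fun ψ _ => integrableOn_cTransform_mul hX hXΩ hReg hρX ψ).sub
      (L.toLinearMap.convexOn convex_univ)
    simpa only [cTransform, smul_eq_mul, mul_comm (ρ x)] using
      (concaveOn_ciInf_add (c x)).smul (hρnn x)
  · exact continuous_finsetSum _ fun y _ =>
      ((continuous_setIntegral_laguerreCell hΩ hReg hTwist
        (hρX.integrable_of_forall_notMem_eq_zero hρsupp) y).sub continuous_const).smul
        continuous_const
  · rw [(hderiv ψ).fderiv]
    simp [laguerreCell]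

/-- Theorem (Aurenhammer, generalized): under (Reg') and (Twist'), the Kantorovich
functional is concave, C¹, and its gradient is `ρ(Lag_y(ψ)) - ν_y`. -/
theorem kantorovich_functional_concave_C1_gradient
    (d : ℕ) (Ω : Set (EuclideanSpace ℝ (Fin d))) (hΩ : IsOpen Ω)
    (Y : Type*) [Fintype Y] [Nonempty Y]
    (c : EuclideanSpace ℝ (Fin d) → Y → ℝ)
    -- (Reg') : each cost function is continuous on Ω
    (hReg : ∀ y : Y, ContinuousOn (fun x => c x y) Ω)
    -- (Twist') : level sets of differences of costs are Lebesgue-negligible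
    (hTwist : ∀ y z : Y, y ≠ z → ∀ t : ℝ,
      volume {x ∈ Ω | c x y - c x z = t} = 0)
    -- X is a compact subset of Ω
    (X : Set (EuclideanSpace ℝ (Fin d))) (hX : IsCompact X) (hXΩ : X ⊆ Ω)
    -- ρ is a bounded probability density supported in X
    (ρ : EuclideanSpace ℝ (Fin d) → ℝ) (hρmeas : Measurable ρ)
    (hρnn : ∀ x, 0 ≤ ρ x) (Cρ : ℝ) (hρbd : ∀ x, ρ x ≤ Cρ)
    (hρsupp : ∀ x, x ∉ X → ρ x = 0)
    (hρint : ∫ x in X, ρ x = 1)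
    -- ν = ∑_y ν_y δ_y is a probability measure on Y
    (ν : Y → ℝ) (hνnn : ∀ y, 0 ≤ ν y) (hν1 : ∑ y, ν y = 1)
    -- the Kantorovich functional
    (Φ : (Y → ℝ) → ℝ)
    (hΦ : ∀ ψ : Y → ℝ,
      Φ ψ = (∫ x in X, (⨅ y : Y, (c x y + ψ y)) * ρ x) - ∑ y, ψ y * ν y) :
    ConcaveOn ℝ univ Φ ∧ ContDiff ℝ 1 Φ ∧
      ∀ ψ v : Y → ℝ,
        fderiv ℝ Φ ψ v =
          ∑ y, ((∫ x in {x ∈ Ω | ∀ z : Y, c x y + ψ y ≤ c x z + ψ z}, ρ x) - ν y) * v y :=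
  kantorovich_functional_concave_C1_gradient_general d Ω hΩ Y c hReg hTwist X hX hXΩ ρ hρmeas hρnn
    Cρ hρbd hρsupp ν Φ hΦ
end

section
/- Assume each cost function c_y is continuous on Ω (Reg') and that for all y ≠ z in Y and every t ∈ ℝ the level set {x ∈ Ω : c(x,y) − c(x,z) = t} has Lebesgue measure zero (Twist'). Let ρ be a probability density over a compact subset X of Ω. Then the map G : ℝ^Y → ℝ^Y defined by G(ψ)_y = ∫_{Lag_y(ψ)} ρ(x) dx is continuous. -/
/-! Off the Lebesgue-null set where, at `ψ₀`, the cost `c x y + ψ₀ y` ties with some other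
`c x z + ψ₀ z` (null by (Twist')), all the inequalities defining `x ∈ Lag_y(ψ₀)` are strict or
strictly violated, so membership of `x` in `Lag_y(ψ)` does not change for `ψ` near `ψ₀`. The
indicators of the cells therefore converge almost everywhere, and dominated convergence with the
integrable bound `|ρ|` gives continuity of the masses. -/

open MeasureTheory Set Filter Topology

theorem ContinuousOn.measurableSet_inter_preimage {α β : Type*} [TopologicalSpace α]
    [MeasurableSpace α] [OpensMeasurableSpace α] [TopologicalSpace β] {f : α → β} {s : Set α}
    {t : Set β} (hf : ContinuousOn f s) (hs : MeasurableSet s) (ht : IsClosed t) :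
    MeasurableSet (s ∩ f ⁻¹' t) := by
  obtain ⟨u, hu, hfu⟩ := continuousOn_iff_isClosed.1 hf t ht
  rw [inter_comm, hfu]
  exact hu.measurableSet.inter hs

theorem eventually_le_iff_of_ne {T α : Type*} [TopologicalSpace T] [LinearOrder α]
    [TopologicalSpace α] [OrderClosedTopology α] {f g : T → α} {t₀ : T}
    (hf : ContinuousAt f t₀) (hg : ContinuousAt g t₀) (hne : f t₀ ≠ g t₀) :
    ∀ᶠ t in 𝓝 t₀, (f t ≤ g t ↔ f t₀ ≤ g t₀) := by
  rcases hne.lt_or_gt with hlt | hgt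
  · filter_upwards [hf.eventually_lt hg hlt] with t ht
    simp [ht.le, hlt.le]
  · filter_upwards [hg.eventually_lt hf hgt] with t ht
    simp [not_le.2 ht, not_le.2 hgt]

theorem tendsto_setIntegral_of_ae_eventually_mem_iff {α ι G : Type*} [MeasurableSpace α]
    [NormedAddCommGroup G] [NormedSpace ℝ G] {μ : Measure α} {l : Filter ι}
    [l.IsCountablyGenerated] {s : ι → Set α} {t : Set α} {f : α → G}
    (hs : ∀ i, MeasurableSet (s i)) (ht : MeasurableSet t) (hf : Integrable f μ)
    (hst : ∀ᵐ x ∂μ, ∀ᶠ i in l, (x ∈ s i ↔ x ∈ t)) :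
    Tendsto (fun i => ∫ x in s i, f x ∂μ) l (𝓝 (∫ x in t, f x ∂μ)) := by
  simp only [← integral_indicator (hs _), ← integral_indicator ht]
  refine tendsto_integral_filter_of_dominated_convergence (fun x => ‖f x‖)
    (.of_forall fun i => hf.aestronglyMeasurable.indicator (hs i))
    (.of_forall fun _ => ae_of_all _ fun x => norm_indicator_le_norm_self f x) hf.norm ?_
  filter_upwards [hst] with x hx
  exact tendsto_const_nhds.congr' (hx.mono fun i hi => by
    by_cases h : x ∈ t <;> simp [h, hi])

section Laguerre

variable {E Y : Type*} {Ω : Set E} {c : E → Y → ℝ}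

def lagCell (Ω : Set E) (c : E → Y → ℝ) (ψ : Y → ℝ) (y : Y) : Set E :=
  {x ∈ Ω | ∀ z, c x y + ψ y ≤ c x z + ψ z}

theorem measurableSet_lagCell [TopologicalSpace E] [MeasurableSpace E] [OpensMeasurableSpace E]
    (hΩ : MeasurableSet Ω) (hc : ∀ y, ContinuousOn (fun x => c x y) Ω) (ψ : Y → ℝ) (y : Y) :
    MeasurableSet (lagCell Ω c ψ y) := by
  have hclosed : IsClosed {v : Y → ℝ | ∀ z, v y ≤ v z} := by
    simp only [ofPred_forall]
    exact isClosed_iInter fun z => isClosed_le (continuous_apply y) (continuous_apply z)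
  have hcont : ContinuousOn (fun x z => c x z + ψ z) Ω :=
    continuousOn_pi.2 fun z => (hc z).add continuousOn_const
  exact hcont.measurableSet_inter_preimage hΩ hclosed

theorem eventually_mem_lagCell_iff [Finite Y] {ψ₀ : Y → ℝ} {x : E} {y : Y}
    (hx : x ∈ Ω → ∀ z, z ≠ y → c x y + ψ₀ y ≠ c x z + ψ₀ z) :
    ∀ᶠ ψ in 𝓝 ψ₀, (x ∈ lagCell Ω c ψ y ↔ x ∈ lagCell Ω c ψ₀ y) := by
  by_cases hxΩ : x ∈ Ω
  · have hineq : ∀ z, ∀ᶠ ψ in 𝓝 ψ₀,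
        (c x y + ψ y ≤ c x z + ψ z ↔ c x y + ψ₀ y ≤ c x z + ψ₀ z) := by
      intro z
      rcases eq_or_ne z y with rfl | hz
      · simp
      · exact eventually_le_iff_of_ne (continuous_const.add (continuous_apply y)).continuousAt
          (continuous_const.add (continuous_apply z)).continuousAt (hx hxΩ z hz)
    filter_upwards [eventually_all.2 hineq] with ψ hψ
    simp only [lagCell, mem_ofPred_eq, hxΩ, true_and]
    exact forall_congr' hψ
  · exact .of_forall fun ψ => by simp [lagCell, hxΩ]

theorem ae_forall_ne_of_measure_level_set_eq_zero [Countable Y] [MeasurableSpace E]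
    {μ : Measure E}
    (hTwist : ∀ y z : Y, y ≠ z → ∀ t : ℝ, μ {x ∈ Ω | c x y - c x z = t} = 0)
    (ψ : Y → ℝ) (y : Y) :
    ∀ᵐ x ∂μ, x ∈ Ω → ∀ z, z ≠ y → c x y + ψ y ≠ c x z + ψ z := by
  have hz : ∀ z, ∀ᵐ x ∂μ, z ≠ y → x ∉ {x ∈ Ω | c x y - c x z = ψ z - ψ y} := by
    intro z
    rcases eq_or_ne z y with rfl | hz
    · exact ae_of_all _ fun _ h => absurd rfl h
    · exact (measure_eq_zero_iff_ae_notMem.1 (hTwist y z hz.symm _)).mono fun _ h _ => h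
  filter_upwards [ae_all_iff.2 hz] with x hx hxΩ z hzy heq
  exact hx z hzy ⟨hxΩ, by linarith⟩

end Laguerre

theorem laguerre_masses_continuous_general
    (d : ℕ) (Ω : Set (EuclideanSpace ℝ (Fin d))) (hΩ : IsOpen Ω)
    (Y : Type*) [Fintype Y]
    (c : EuclideanSpace ℝ (Fin d) → Y → ℝ)
    -- (Reg') : each cost function is continuous on Ω
    (hReg : ∀ y : Y, ContinuousOn (fun x => c x y) Ω)
    -- (Twist') : level sets of differences of costs are Lebesgue-negligible
    (hTwist : ∀ y z : Y, y ≠ z → ∀ t : ℝ,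
      volume {x ∈ Ω | c x y - c x z = t} = 0)
    -- ρ is a probability density over a compact subset X of Ω
    (X : Set (EuclideanSpace ℝ (Fin d)))
    (ρ : EuclideanSpace ℝ (Fin d) → ℝ)
    (hρsupp : ∀ x, x ∉ X → ρ x = 0)
    (hρint : ∫ x in X, ρ x = 1) :
    Continuous (fun ψ : Y → ℝ => fun y : Y =>
      ∫ x in {x ∈ Ω | ∀ z : Y, c x y + ψ y ≤ c x z + ψ z}, ρ x) := by
  have hsupp : Function.support ρ ⊆ X := fun x hx => not_not.1 (mt (hρsupp x) hx)
  have hρ : Integrable ρ := (integrableOn_iff_integrable_of_support_subset hsupp).1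
    (Integrable.of_integral_ne_zero (by rw [hρint]; exact one_ne_zero))
  refine continuous_pi fun y => continuous_iff_continuousAt.2 fun ψ₀ => ?_
  exact tendsto_setIntegral_of_ae_eventually_mem_iff
    (fun ψ => measurableSet_lagCell hΩ.measurableSet hReg ψ y)
    (measurableSet_lagCell hΩ.measurableSet hReg ψ₀ y) hρ
    ((ae_forall_ne_of_measure_level_set_eq_zero hTwist ψ₀ y).mono
      fun _ hx => eventually_mem_lagCell_iff hx)

/-- Proposition: under (Reg') and (Twist'), the map `ψ ↦ (ρ(Lag_y(ψ)))_{y ∈ Y}`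
is continuous. -/
theorem laguerre_masses_continuous
    (d : ℕ) (Ω : Set (EuclideanSpace ℝ (Fin d))) (hΩ : IsOpen Ω)
    (Y : Type*) [Fintype Y] [Nonempty Y]
    (c : EuclideanSpace ℝ (Fin d) → Y → ℝ)
    -- (Reg') : each cost function is continuous on Ω
    (hReg : ∀ y : Y, ContinuousOn (fun x => c x y) Ω)
    -- (Twist') : level sets of differences of costs are Lebesgue-negligible
    (hTwist : ∀ y z : Y, y ≠ z → ∀ t : ℝ,
      volume {x ∈ Ω | c x y - c x z = t} = 0)
    -- ρ is a probability density over a compact subset X of Ω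
    (X : Set (EuclideanSpace ℝ (Fin d))) (hX : IsCompact X) (hXΩ : X ⊆ Ω)
    (ρ : EuclideanSpace ℝ (Fin d) → ℝ) (hρmeas : Measurable ρ)
    (hρnn : ∀ x, 0 ≤ ρ x) (hρsupp : ∀ x, x ∉ X → ρ x = 0)
    (hρint : ∫ x in X, ρ x = 1) :
    Continuous (fun ψ : Y → ℝ => fun y : Y =>
      ∫ x in {x ∈ Ω | ∀ z : Y, c x y + ψ y ≤ c x z + ψ z}, ρ x) :=
  laguerre_masses_continuous_general d Ω hΩ Y c hReg hTwist X ρ hρsupp hρint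
end

section
/- Let K ⊂ ℝ^d be a compact convex set, and let F be a C¹ diffeomorphism from an open neighborhood of K onto an open subset of ℝ^d such that F(K) is also convex. Then for every x ∈ ∂K, the normal cone of F(K) at F(x) equals the image of the normal cone of K at x under the adjoint of the derivative of F^{-1} at F(x): N_{F(x)}(F(K)) = (D F^{-1}|_{F(x)})^* (N_x K). -/
/-!
If `v` is normal to the convex set `Φ '' C` at `Φ z`, then `y ↦ ⟪Φ y, v⟫` is maximized on `C`
at `z`, so its derivative `⟪B (p - z), v⟫ = ⟪p - z, B† v⟫` is nonpositive along every segment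
`[z, p] ⊆ C`: the adjoint of the derivative maps normal cones of the image back to normal cones.
Applied to `F` on `K` this gives `N_{F x}(F K) ⊆ (DF)† ⁻¹' N_x K`, and since `(DG)† ∘ (DF)† = id`
every such `v` equals `(DG)† ((DF)† v)`; applied to `G` on the convex set `F '' K` it gives
`(DG)† '' N_x K ⊆ N_{F x}(F K)`.
-/

open Set Filter Topology

theorem HasFDerivAt.comp_eq_id_of_eventually_rightInverse {𝕜 E F : Type*}
    [NontriviallyNormedField 𝕜] [NormedAddCommGroup E] [NormedSpace 𝕜 E]
    [NormedAddCommGroup F] [NormedSpace 𝕜 F] {f : E → F} {g : F → E}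
    {f' : E →L[𝕜] F} {g' : F →L[𝕜] E} {y : F} (hf : HasFDerivAt f f' (g y))
    (hg : HasFDerivAt g g' y) (hfg : f ∘ g =ᶠ[𝓝 y] id) :
    f'.comp g' = ContinuousLinearMap.id 𝕜 F :=
  ((hf.comp y hg).congr_of_eventuallyEq hfg.symm).unique (hasFDerivAt_id y)

def normalCone {E : Type*} [NormedAddCommGroup E] [InnerProductSpace ℝ E] (C : Set E) (x : E) :
    Set E :=
  {v | ∀ y ∈ C, inner ℝ (y - x) v ≤ 0}

theorem adjoint_mem_normalCone_of_hasFDerivWithinAt {E F : Type*}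
    [NormedAddCommGroup E] [InnerProductSpace ℝ E] [CompleteSpace E]
    [NormedAddCommGroup F] [InnerProductSpace ℝ F] [CompleteSpace F]
    {C : Set E} (hC : Convex ℝ C) {z : E} (hz : z ∈ C) {Φ : E → F} {B : E →L[ℝ] F}
    (hΦ : HasFDerivWithinAt Φ B C z) {v : F} (hv : v ∈ normalCone (Φ '' C) (Φ z)) :
    ContinuousLinearMap.adjoint B v ∈ normalCone C z := by
  intro p hp
  have hmax : IsMaxOn (innerSL ℝ v ∘ Φ) C z := fun y hy => by
    have := hv _ (mem_image_of_mem Φ hy)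
    rw [inner_sub_left, sub_nonpos] at this
    simpa [real_inner_comm v] using this
  have := hmax.localize.hasFDerivWithinAt_nonpos
    ((innerSL ℝ v).hasFDerivAt.comp_hasFDerivWithinAt z hΦ)
    (sub_mem_posTangentConeAt_of_segment_subset (hC.segment_subset hz hp))
  simpa [ContinuousLinearMap.adjoint_inner_right, real_inner_comm v] using this

theorem normal_cone_image_of_diffeomorphism_general
    (d : ℕ)
    (K U : Set (EuclideanSpace ℝ (Fin d)))
    (hK : IsCompact K) (hKconv : Convex ℝ K)
    (hU : IsOpen U) (hKU : K ⊆ U)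
    (F G : EuclideanSpace ℝ (Fin d) → EuclideanSpace ℝ (Fin d))
    (hF : ContDiffOn ℝ 1 F U)
    (hFUopen : IsOpen (F '' U))
    (hG : ContDiffOn ℝ 1 G (F '' U))
    (hGF : ∀ x ∈ U, G (F x) = x)
    (hFG : ∀ y ∈ F '' U, F (G y) = y)
    (hFK : Convex ℝ (F '' K))
    (x : EuclideanSpace ℝ (Fin d)) (hx : x ∈ frontier K) :
    {v : EuclideanSpace ℝ (Fin d) | ∀ q ∈ F '' K, (inner ℝ (q - F x) v : ℝ) ≤ 0} =
      (ContinuousLinearMap.adjoint (fderiv ℝ G (F x))) ''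
        {v : EuclideanSpace ℝ (Fin d) | ∀ q ∈ K, (inner ℝ (q - x) v : ℝ) ≤ 0} := by
  have hxK : x ∈ K := hK.isClosed.frontier_subset hx
  have hxU : x ∈ U := hKU hxK
  have hFU : F '' U ∈ 𝓝 (F x) := hFUopen.mem_nhds (mem_image_of_mem F hxU)
  have hB : HasFDerivAt F (fderiv ℝ F x) x :=
    (hF.differentiableOn one_ne_zero).hasFDerivAt (hU.mem_nhds hxU)
  have hA : HasFDerivAt G (fderiv ℝ G (F x)) (F x) :=
    (hG.differentiableOn one_ne_zero).hasFDerivAt hFU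
  have hBA : (fderiv ℝ F x).comp (fderiv ℝ G (F x)) = ContinuousLinearMap.id ℝ _ :=
    (show HasFDerivAt F _ (G (F x)) by rwa [hGF x hxU]).comp_eq_id_of_eventually_rightInverse hA
      (eventually_of_mem hFU hFG)
  ext v
  constructor
  · intro hv
    refine ⟨_, adjoint_mem_normalCone_of_hasFDerivWithinAt hKconv hxK hB.hasFDerivWithinAt hv, ?_⟩
    rw [← ContinuousLinearMap.comp_apply, ← ContinuousLinearMap.adjoint_comp, hBA,
      ContinuousLinearMap.adjoint_id, ContinuousLinearMap.id_apply]
  · rintro ⟨w, hw, rfl⟩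
    refine adjoint_mem_normalCone_of_hasFDerivWithinAt hFK (mem_image_of_mem F hxK)
      hA.hasFDerivWithinAt ?_
    rwa [LeftInvOn.image_image' hGF hKU, hGF x hxU]

/-- Lemma: the normal cone of the (convex) image of a convex set under a C¹
diffeomorphism F is the image of the normal cone under the adjoint of D(F⁻¹). -/
theorem normal_cone_image_of_diffeomorphism
    (d : ℕ)
    (K U : Set (EuclideanSpace ℝ (Fin d)))
    (hK : IsCompact K) (hKconv : Convex ℝ K)
    (hU : IsOpen U) (hKU : K ⊆ U)
    (F G : EuclideanSpace ℝ (Fin d) → EuclideanSpace ℝ (Fin d))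
    (hF : ContDiffOn ℝ 1 F U) (hFinj : InjOn F U)
    (hFUopen : IsOpen (F '' U))
    (hG : ContDiffOn ℝ 1 G (F '' U))
    (hGF : ∀ x ∈ U, G (F x) = x)
    (hFG : ∀ y ∈ F '' U, F (G y) = y)
    (hFK : Convex ℝ (F '' K))
    (x : EuclideanSpace ℝ (Fin d)) (hx : x ∈ frontier K) :
    {v : EuclideanSpace ℝ (Fin d) | ∀ q ∈ F '' K, (inner ℝ (q - F x) v : ℝ) ≤ 0} =
      (ContinuousLinearMap.adjoint (fderiv ℝ G (F x))) ''
        {v : EuclideanSpace ℝ (Fin d) | ∀ q ∈ K, (inner ℝ (q - x) v : ℝ) ≤ 0} :=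
  normal_cone_image_of_diffeomorphism_general d K U hK hKconv hU hKU F G hF hFUopen hG hGF hFG hFK x
    hx
end

section
/- Let A : ℝ^d → ℝ^d be an invertible linear map and let cond(A) := ‖A‖·‖A^{-1}‖ be its condition number (operator norms). Then for all nonzero vectors v, w ∈ ℝ^d, cond(A)^{-2} (1 + ⟨v,w⟩/(‖v‖‖w‖)) ≤ 1 + ⟨Av, Aw⟩/(‖Av‖‖Aw‖) ≤ cond(A)^{2} (1 + ⟨v,w⟩/(‖v‖‖w‖)). -/
/-!
Since `1 + cos ∠(v, w) = ‖v / ‖v‖ + w / ‖w‖‖² / 2`, it suffices to compare the bisector vectors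
of `(v, w)` and `(A v, A w)`. The latter is `A x` with `x = v / ‖A v‖ + w / ‖A w‖`, so
`‖x‖ ≤ ‖A⁻¹‖ ‖A x‖`. The coefficients of `‖A‖ x` are at least those of the bisector of `(v, w)`,
and enlarging (beyond `1`) the coefficients of a sum of two vectors of equal length never
shortens it, because `a + b` makes a non-obtuse angle with both `a` and `b`. Hence the bisector of
`(v, w)` is at most `‖A‖ ‖A⁻¹‖` times that of `(A v, A w)`; applying this to `A⁻¹` gives the
reverse bound.
-/

open scoped RealInnerProductSpace

section

variable {E F : Type*} [NormedAddCommGroup E] [InnerProductSpace ℝ E]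
  [NormedAddCommGroup F] [InnerProductSpace ℝ F]

theorem norm_le_norm_add_of_inner_nonneg {x y : E} (h : 0 ≤ ⟪x, y⟫) : ‖x‖ ≤ ‖x + y‖ := by
  have : ‖x‖ ^ 2 ≤ ‖x + y‖ ^ 2 := by
    rw [norm_add_sq_real]
    nlinarith [sq_nonneg ‖y‖]
  exact (pow_le_pow_iff_left₀ (norm_nonneg _) (norm_nonneg _) two_ne_zero).mp this

theorem norm_add_le_norm_smul_add_smul_of_norm_eq {a b : E} (hab : ‖a‖ = ‖b‖) {s t : ℝ}
    (hs : 1 ≤ s) (ht : 1 ≤ t) : ‖a + b‖ ≤ ‖s • a + t • b‖ := by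
  have hcos : -(‖a‖ * ‖b‖) ≤ ⟪a, b⟫ := neg_le_of_abs_le (abs_real_inner_le_norm a b)
  have hinner : 0 ≤ ⟪a + b, (s - 1) • a + (t - 1) • b⟫ := by
    simp only [inner_add_left, inner_add_right, real_inner_smul_right, real_inner_self_eq_norm_sq,
      real_inner_comm a b]
    rw [← hab] at hcos ⊢
    nlinarith
  calc ‖a + b‖ ≤ ‖a + b + ((s - 1) • a + (t - 1) • b)‖ :=
        norm_le_norm_add_of_inner_nonneg hinner
    _ = ‖s • a + t • b‖ := by congr 1; module

theorem one_add_inner_div_norm_mul_norm {v w : E} (hv : v ≠ 0) (hw : w ≠ 0) :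
    1 + ⟪v, w⟫ / (‖v‖ * ‖w‖) = ‖‖v‖⁻¹ • v + ‖w‖⁻¹ • w‖ ^ 2 / 2 := by
  have hv' : ‖v‖ ≠ 0 := norm_ne_zero_iff.mpr hv
  have hw' : ‖w‖ ≠ 0 := norm_ne_zero_iff.mpr hw
  rw [norm_add_sq_real, norm_smul, norm_smul, real_inner_smul_left, real_inner_smul_right,
    norm_inv, norm_inv, norm_norm, norm_norm]
  field_simp
  ring

theorem norm_inv_smul_add_inv_smul_le_of_one_le {v w : E} (hv : v ≠ 0) (hw : w ≠ 0)
    {s t : ℝ} (hs : 1 ≤ s * ‖v‖) (ht : 1 ≤ t * ‖w‖) :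
    ‖‖v‖⁻¹ • v + ‖w‖⁻¹ • w‖ ≤ ‖s • v + t • w‖ := by
  have hv' : ‖v‖ ≠ 0 := norm_ne_zero_iff.mpr hv
  have hw' : ‖w‖ ≠ 0 := norm_ne_zero_iff.mpr hw
  have hsv : s • v = (s * ‖v‖) • ‖v‖⁻¹ • v := by
    rw [smul_smul, mul_assoc, mul_inv_cancel₀ hv', mul_one]
  have htw : t • w = (t * ‖w‖) • ‖w‖⁻¹ • w := by
    rw [smul_smul, mul_assoc, mul_inv_cancel₀ hw', mul_one]
  rw [hsv, htw]
  refine norm_add_le_norm_smul_add_smul_of_norm_eq ?_ hs ht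
  rw [norm_smul, norm_smul, norm_inv, norm_inv, norm_norm, norm_norm, inv_mul_cancel₀ hv',
    inv_mul_cancel₀ hw']

theorem ContinuousLinearEquiv.norm_inv_smul_add_inv_smul_le (A : E ≃L[ℝ] F) {v w : E}
    (hv : v ≠ 0) (hw : w ≠ 0) :
    ‖‖v‖⁻¹ • v + ‖w‖⁻¹ • w‖ ≤
      ‖(A : E →L[ℝ] F)‖ * ‖(A.symm : F →L[ℝ] E)‖ * ‖‖A v‖⁻¹ • A v + ‖A w‖⁻¹ • A w‖ := by
  set x := ‖A v‖⁻¹ • v + ‖A w‖⁻¹ • w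
  have hAx : A x = ‖A v‖⁻¹ • A v + ‖A w‖⁻¹ • A w := by simp [x]
  have hAv : 0 < ‖A v‖ := norm_pos_iff.mpr (A.map_ne_zero_iff.mpr hv)
  have hAw : 0 < ‖A w‖ := norm_pos_iff.mpr (A.map_ne_zero_iff.mpr hw)
  have hx : ‖x‖ ≤ ‖(A.symm : F →L[ℝ] E)‖ * ‖A x‖ := by
    simpa using (A.symm : F →L[ℝ] E).le_opNorm (A x)
  have hs : 1 ≤ ‖(A : E →L[ℝ] F)‖ * ‖A v‖⁻¹ * ‖v‖ := by
    rw [mul_right_comm, ← div_eq_mul_inv, one_le_div₀ hAv]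
    exact (A : E →L[ℝ] F).le_opNorm v
  have ht : 1 ≤ ‖(A : E →L[ℝ] F)‖ * ‖A w‖⁻¹ * ‖w‖ := by
    rw [mul_right_comm, ← div_eq_mul_inv, one_le_div₀ hAw]
    exact (A : E →L[ℝ] F).le_opNorm w
  calc ‖‖v‖⁻¹ • v + ‖w‖⁻¹ • w‖
      ≤ ‖(‖(A : E →L[ℝ] F)‖ * ‖A v‖⁻¹) • v + (‖(A : E →L[ℝ] F)‖ * ‖A w‖⁻¹) • w‖ :=
        norm_inv_smul_add_inv_smul_le_of_one_le hv hw hs ht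
    _ = ‖(A : E →L[ℝ] F)‖ * ‖x‖ := by
        rw [mul_smul, mul_smul, ← smul_add, norm_smul, norm_norm]
    _ ≤ ‖(A : E →L[ℝ] F)‖ * ‖(A.symm : F →L[ℝ] E)‖ * ‖A x‖ := by
        rw [mul_assoc]; exact mul_le_mul_of_nonneg_left hx (norm_nonneg _)
    _ = _ := by rw [hAx]

end

/-- Lemma (generalized Wielandt angle estimate): an invertible linear map A distorts
the quantity 1 + cos of the angle between nonzero vectors by at most cond(A)². -/
theorem wielandt_angle_distortion
    (d : ℕ)
    (A : EuclideanSpace ℝ (Fin d) ≃L[ℝ] EuclideanSpace ℝ (Fin d))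
    (v w : EuclideanSpace ℝ (Fin d)) (hv : v ≠ 0) (hw : w ≠ 0) :
    (1 / (‖(A : EuclideanSpace ℝ (Fin d) →L[ℝ] EuclideanSpace ℝ (Fin d))‖ *
          ‖(A.symm : EuclideanSpace ℝ (Fin d) →L[ℝ] EuclideanSpace ℝ (Fin d))‖) ^ 2) *
        (1 + (inner ℝ v w : ℝ) / (‖v‖ * ‖w‖)) ≤
      1 + (inner ℝ (A v) (A w) : ℝ) / (‖A v‖ * ‖A w‖) ∧
    1 + (inner ℝ (A v) (A w) : ℝ) / (‖A v‖ * ‖A w‖) ≤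
      (‖(A : EuclideanSpace ℝ (Fin d) →L[ℝ] EuclideanSpace ℝ (Fin d))‖ *
       ‖(A.symm : EuclideanSpace ℝ (Fin d) →L[ℝ] EuclideanSpace ℝ (Fin d))‖) ^ 2 *
        (1 + (inner ℝ v w : ℝ) / (‖v‖ * ‖w‖)) := by
  have hAv : A v ≠ 0 := A.map_ne_zero_iff.mpr hv
  have hAw : A w ≠ 0 := A.map_ne_zero_iff.mpr hw
  have hlower := A.norm_inv_smul_add_inv_smul_le hv hw
  have hupper := A.symm.norm_inv_smul_add_inv_smul_le hAv hAw
  simp only [ContinuousLinearEquiv.symm_symm, ContinuousLinearEquiv.symm_apply_apply] at hupper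
  rw [mul_comm _ ‖(A : EuclideanSpace ℝ (Fin d) →L[ℝ] EuclideanSpace ℝ (Fin d))‖] at hupper
  rw [one_add_inner_div_norm_mul_norm hv hw, one_add_inner_div_norm_mul_norm hAv hAw]
  set κ := ‖(A : EuclideanSpace ℝ (Fin d) →L[ℝ] EuclideanSpace ℝ (Fin d))‖ *
    ‖(A.symm : EuclideanSpace ℝ (Fin d) →L[ℝ] EuclideanSpace ℝ (Fin d))‖
  have hlower_sq := pow_le_pow_left₀ (norm_nonneg _) hlower 2
  have hupper_sq := pow_le_pow_left₀ (norm_nonneg _) hupper 2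
  rw [mul_pow] at hlower_sq hupper_sq
  constructor
  · rw [one_div_mul_eq_div]
    exact div_le_of_le_mul₀ (sq_nonneg κ) (by positivity) (by linarith)
  · linarith
end
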